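/- arXiv:0906.1151 — 13 statements merged into one kernel-verified Lean document; each statement's English description precedes it below -/
import Mathlib

section
/- Every LR-algebra is Lie admissible: in an LR-algebra A, the commutator [x,y] = x·y − y·x satisfies the Jacobi identity, hence defines a Lie bracket on A. -/
theorem lr_lie_admissible_general {k A : Type*} [Field k]
    [AddCommGroup A] [Module k A]
    (mul : A →ₗ[k] A →ₗ[k] A)
    (hL : ∀ x y z : A, mul x (mul y z) = mul y (mul x z))
    (hR : ∀ x y z : A, mul (mul x y) z = mul (mul x z) y) :
    ∀ x y z : A,
      (mul x (mul y z - mul z y) - mul (mul y z - mul z y) x) +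
      (mul y (mul z x - mul x z) - mul (mul z x - mul x z) y) +
      (mul z (mul x y - mul y x) - mul (mul x y - mul y x) z) = 0 := by
  intro x y z
  simp only [map_sub, LinearMap.sub_apply]
  -- Of the twelve products, the six of the form `a (b c)` cancel in pairs by `hL`,
  -- and the six of the form `(a b) c` by `hR`.
  rw [hL x y z, hL x z y, hL y z x, hR z y x, hR x z y, hR y x z]
  abel

/-- Every LR-algebra is Lie admissible: the commutator `x·y − y·x`
satisfies the Jacobi identity. -/
theorem lr_lie_admissible {k A : Type*} [Field k] [CharZero k]
    [AddCommGroup A] [Module k A]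
    (mul : A →ₗ[k] A →ₗ[k] A)
    (hL : ∀ x y z : A, mul x (mul y z) = mul y (mul x z))
    (hR : ∀ x y z : A, mul (mul x y) z = mul (mul x z) y) :
    ∀ x y z : A,
      (mul x (mul y z - mul z y) - mul (mul y z - mul z y) x) +
      (mul y (mul z x - mul x z) - mul (mul z x - mul x z) y) +
      (mul z (mul x y - mul y x) - mul (mul x y - mul y x) z) = 0 :=
  lr_lie_admissible_general mul hL hR
end

section
/- In an LR-algebra A, for all x,y,z ∈ A one has R(x)∘R(y·z) = R((y·x)·z), where R denotes the right multiplication operator. -/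
theorem lr_R_comp_R_general {k A : Type*} [Field k]
    [AddCommGroup A] [Module k A]
    (mul : A →ₗ[k] A →ₗ[k] A)
    (hL : ∀ x y z : A, mul x (mul y z) = mul y (mul x z))
    (hR : ∀ x y z : A, mul (mul x y) z = mul (mul x z) y)
    (x y z : A) :
    (mul.flip x) ∘ₗ (mul.flip (mul y z)) = mul.flip (mul (mul y x) z) := by
  ext a
  calc mul (mul a (mul y z)) x
      = mul (mul y (mul a z)) x := by rw [hL a y z]
    _ = mul (mul y x) (mul a z) := hR y (mul a z) x
    _ = mul a (mul (mul y x) z) := hL (mul y x) a z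

/-- In an LR-algebra, `R(x) ∘ R(y·z) = R((y·x)·z)`. -/
theorem lr_R_comp_R {k A : Type*} [Field k] [CharZero k]
    [AddCommGroup A] [Module k A]
    (mul : A →ₗ[k] A →ₗ[k] A)
    (hL : ∀ x y z : A, mul x (mul y z) = mul y (mul x z))
    (hR : ∀ x y z : A, mul (mul x y) z = mul (mul x z) y)
    (x y z : A) :
    (mul.flip x) ∘ₗ (mul.flip (mul y z)) = mul.flip (mul (mul y x) z) :=
  lr_R_comp_R_general mul hL hR x y z
end

section
/- In an LR-algebra A, the identity (x·y)·(u·v) − (u·v)·(x·y) = 0 holds for all x,y,u,v ∈ A; equivalently, the subspace A·A is commutative for the commutator bracket. -/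
/-! Using only the two LR laws, a product of two products may exchange its two left factors
and also its two right factors. Exchanging the left factors of `(x·y)·(u·v)` and the right
factors of `(u·v)·(x·y)` gives the same element `(u·y)·(x·v)`. -/

section LRMagma

variable {A : Type*} (op : A → A → A)

theorem lr_op_op_comm_left (hL : ∀ x y z, op x (op y z) = op y (op x z))
    (hR : ∀ x y z, op (op x y) z = op (op x z) y) (x y u v : A) :
    op (op x y) (op u v) = op (op u y) (op x v) := by
  rw [hR x y, hL x u v, hR u (op x v) y]

theorem lr_op_op_comm_right (hL : ∀ x y z, op x (op y z) = op y (op x z))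
    (hR : ∀ x y z, op (op x y) z = op (op x z) y) (x y u v : A) :
    op (op x y) (op u v) = op (op x v) (op u y) := by
  rw [hL (op x y) u v, hR x y v, hL u (op x v) y]

end LRMagma

theorem lr_products_commute_general {k A : Type*} [Field k]
    [AddCommGroup A] [Module k A]
    (mul : A →ₗ[k] A →ₗ[k] A)
    (hL : ∀ x y z : A, mul x (mul y z) = mul y (mul x z))
    (hR : ∀ x y z : A, mul (mul x y) z = mul (mul x z) y)
    (x y u v : A) :
    mul (mul x y) (mul u v) - mul (mul u v) (mul x y) = 0 := by
  rw [sub_eq_zero, lr_op_op_comm_left (mul · ·) hL hR x y u v,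
    lr_op_op_comm_right (mul · ·) hL hR u v x y]

/-- In an LR-algebra, `(x·y)·(u·v) − (u·v)·(x·y) = 0` for all `x,y,u,v`. -/
theorem lr_products_commute {k A : Type*} [Field k] [CharZero k]
    [AddCommGroup A] [Module k A]
    (mul : A →ₗ[k] A →ₗ[k] A)
    (hL : ∀ x y z : A, mul x (mul y z) = mul y (mul x z))
    (hR : ∀ x y z : A, mul (mul x y) z = mul (mul x z) y)
    (x y u v : A) :
    mul (mul x y) (mul u v) - mul (mul u v) (mul x y) = 0 :=
  lr_products_commute_general mul hL hR x y u v
end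

section
/- If a Lie algebra g over a field of characteristic zero admits an LR-structure, then g is 2-step solvable, i.e. [[g,g],[g,g]] = 0. -/
/-!
Left and right multiplications each commute among themselves, and alternating the two
rules shows that any two products commute: `(ab)(cd) = (cd)(ab)`. As `[x, y] = xy - yx`,
the bracket of two brackets expands into four brackets of products, each of which vanishes.
-/

structure IsLRProduct {α : Type*} (mul : α → α → α) : Prop where
  left_comm : ∀ x y z, mul x (mul y z) = mul y (mul x z)
  right_comm : ∀ x y z, mul (mul x y) z = mul (mul x z) y

theorem IsLRProduct.comm_mul_mul {α : Type*} {mul : α → α → α} (h : IsLRProduct mul)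
    (a b c d : α) : mul (mul a b) (mul c d) = mul (mul c d) (mul a b) :=
  calc mul (mul a b) (mul c d)
      = mul (mul a (mul c d)) b := h.right_comm _ _ _
    _ = mul (mul c (mul a d)) b := by rw [h.left_comm]
    _ = mul (mul c b) (mul a d) := h.right_comm _ _ _
    _ = mul a (mul (mul c b) d) := h.left_comm _ _ _
    _ = mul a (mul (mul c d) b) := by rw [h.right_comm]
    _ = mul (mul c d) (mul a b) := h.left_comm _ _ _

theorem lr_twoStepSolvable_general {k g : Type*} [Field k]
    [LieRing g] [LieAlgebra k g]
    (mul : g →ₗ[k] g →ₗ[k] g)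
    (hL : ∀ x y z : g, mul x (mul y z) = mul y (mul x z))
    (hR : ∀ x y z : g, mul (mul x y) z = mul (mul x z) y)
    (hcompat : ∀ x y : g, mul x y - mul y x = ⁅x, y⁆) :
    ∀ a b c d : g, ⁅⁅a, b⁆, ⁅c, d⁆⁆ = 0 := by
  have hLR : IsLRProduct fun x y => mul x y := ⟨hL, hR⟩
  have lie_mul_mul : ∀ x y z w, ⁅mul x y, mul z w⁆ = 0 := fun x y z w => by
    rw [← hcompat, sub_eq_zero]
    exact hLR.comm_mul_mul x y z w
  intro a b c d
  rw [← hcompat a b, ← hcompat c d]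
  simp only [sub_lie, lie_sub, lie_mul_mul, sub_self]

/-- A Lie algebra admitting an LR-structure is 2-step solvable. -/
theorem lr_twoStepSolvable {k g : Type*} [Field k] [CharZero k]
    [LieRing g] [LieAlgebra k g]
    (mul : g →ₗ[k] g →ₗ[k] g)
    (hL : ∀ x y z : g, mul x (mul y z) = mul y (mul x z))
    (hR : ∀ x y z : g, mul (mul x y) z = mul (mul x z) y)
    (hcompat : ∀ x y : g, mul x y - mul y x = ⁅x, y⁆) :
    ∀ a b c d : g, ⁅⁅a, b⁆, ⁅c, d⁆⁆ = 0 :=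
  lr_twoStepSolvable_general mul hL hR hcompat
end

section
/- Let (A,·) be an LR-structure on a finite-dimensional Lie algebra g over a field of characteristic zero. If all left multiplications L(x) and all right multiplications R(x) are nilpotent operators, then the Lie algebra g is nilpotent. -/
/-!
Let `B = map₂ mul ⊤ ⊤` be the span of all products `a · b`. It is stable under every `L(x)` and
`R(y)`, and the two LR-identities give `x · (w · y) = (x · w) · y` for `w ∈ B`, i.e. `L(x)` and
`R(y)` commute on `B`. Since `ad x = L(x) - R(x)` maps `g` into `B` and restricts on `B` to a
difference of commuting nilpotent operators, `ad x` is nilpotent, and Engel's theorem applies.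
-/

open Set Submodule

namespace Module.End

variable {R M : Type*} [Semiring R] [AddCommMonoid M] [Module R M]

theorem isNilpotent_of_forall_mem_of_isNilpotent_restrict {f : End R M} {p : Submodule R M}
    (hf : ∀ x, f x ∈ p) (hnil : IsNilpotent (f.restrict (p := p) fun x _ ↦ hf x)) :
    IsNilpotent f := by
  obtain ⟨n, hn⟩ := hnil
  refine ⟨n + 1, LinearMap.ext fun x ↦ ?_⟩
  have hx := congr_arg Subtype.val (LinearMap.congr_fun hn ⟨f x, hf x⟩)
  rw [pow_restrict, LinearMap.coe_restrict_apply] at hx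
  rw [pow_succ, mul_apply]
  exact hx

end Module.End

section LRIdentities

variable {R M : Type*} [CommRing R] [AddCommGroup M] [Module R M] {mul : M →ₗ[R] M →ₗ[R] M}

theorem mul_mem_map₂_top (x y : M) : mul x y ∈ map₂ mul ⊤ ⊤ :=
  apply_mem_map₂ mul mem_top mem_top

variable (hL : ∀ x y z : M, mul x (mul y z) = mul y (mul x z))
  (hR : ∀ x y z : M, mul (mul x y) z = mul (mul x z) y)
include hL hR

theorem mul_mul_eq_mul_mul_of_mem_map₂_top (x y : M) {w : M} (hw : w ∈ map₂ mul ⊤ ⊤) :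
    mul x (mul w y) = mul (mul x w) y := by
  suffices map₂ mul ⊤ ⊤ ≤ LinearMap.ker (mul x ∘ₗ mul.flip y - mul.flip y ∘ₗ mul x) by
    simpa [sub_eq_zero] using this hw
  refine map₂_le.mpr fun a _ b _ ↦ ?_
  simp only [LinearMap.mem_ker, LinearMap.sub_apply, LinearMap.comp_apply, LinearMap.flip_apply,
    sub_eq_zero]
  calc mul x (mul (mul a b) y) = mul x (mul (mul a y) b) := by rw [hR]
    _ = mul (mul a y) (mul x b) := hL _ _ _
    _ = mul (mul a (mul x b)) y := (hR _ _ _).symm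
    _ = mul (mul x (mul a b)) y := by rw [hL]

theorem isNilpotent_mul_sub_mul_flip (x : M) (hLnil : IsNilpotent (mul x))
    (hRnil : IsNilpotent (mul.flip x)) : IsNilpotent (mul x - mul.flip x) := by
  have hLmaps : MapsTo (mul x) (map₂ mul ⊤ ⊤) (map₂ mul ⊤ ⊤) := fun y _ ↦ mul_mem_map₂_top x y
  have hRmaps : MapsTo (mul.flip x) (map₂ mul ⊤ ⊤) (map₂ mul ⊤ ⊤) :=
    fun y _ ↦ mul_mem_map₂_top y x
  have hcomm : Commute ((mul x).restrict hLmaps) ((mul.flip x).restrict hRmaps) :=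
    LinearMap.ext fun w ↦ Subtype.ext (mul_mul_eq_mul_mul_of_mem_map₂_top hL hR x x w.2)
  refine Module.End.isNilpotent_of_forall_mem_of_isNilpotent_restrict
    (fun y ↦ sub_mem (mul_mem_map₂_top x y) (mul_mem_map₂_top y x)) ?_
  rw [← LinearMap.restrict_sub hLmaps hRmaps]
  exact hcomm.isNilpotent_sub (Module.End.isNilpotent.restrict hLmaps hLnil)
    (Module.End.isNilpotent.restrict hRmaps hRnil)

end LRIdentities

theorem lr_nilpotent_of_L_R_nilpotent_general {k g : Type*} [Field k]
    [LieRing g] [LieAlgebra k g] [FiniteDimensional k g]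
    (mul : g →ₗ[k] g →ₗ[k] g)
    (hL : ∀ x y z : g, mul x (mul y z) = mul y (mul x z))
    (hR : ∀ x y z : g, mul (mul x y) z = mul (mul x z) y)
    (hcompat : ∀ x y : g, mul x y - mul y x = ⁅x, y⁆)
    (hLnil : ∀ x : g, IsNilpotent (mul x : Module.End k g))
    (hRnil : ∀ x : g, IsNilpotent (mul.flip x : Module.End k g)) :
    LieRing.IsNilpotent g := by
  refine (LieAlgebra.isNilpotent_iff_forall (R := k)).mpr fun x ↦ ?_
  have had : LieAlgebra.ad k g x = mul x - mul.flip x :=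
    LinearMap.ext fun y ↦ (hcompat x y).symm
  rw [had]
  exact isNilpotent_mul_sub_mul_flip hL hR x (hLnil x) (hRnil x)

/-- If all left and right multiplications of an LR-structure on `g` are
nilpotent, then `g` is a nilpotent Lie algebra. -/
theorem lr_nilpotent_of_L_R_nilpotent {k g : Type*} [Field k] [CharZero k]
    [LieRing g] [LieAlgebra k g] [FiniteDimensional k g]
    (mul : g →ₗ[k] g →ₗ[k] g)
    (hL : ∀ x y z : g, mul x (mul y z) = mul y (mul x z))
    (hR : ∀ x y z : g, mul (mul x y) z = mul (mul x z) y)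
    (hcompat : ∀ x y : g, mul x y - mul y x = ⁅x, y⁆)
    (hLnil : ∀ x : g, IsNilpotent (mul x : Module.End k g))
    (hRnil : ∀ x : g, IsNilpotent (mul.flip x : Module.End k g)) :
    LieRing.IsNilpotent g :=
  lr_nilpotent_of_L_R_nilpotent_general mul hL hR hcompat hLnil hRnil
end

section
/- Let (A,·) be an LR-structure on a finite-dimensional nilpotent Lie algebra g over a field of characteristic zero. If all right multiplications R(x) are nilpotent, then all left multiplications L(x) are nilpotent. -/
/-!
The right multiplication `R(x)` of an LR-structure is a derivation of the Lie bracket (this is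
where both LR identities enter), so it preserves every term `Cⁱ` of the lower central series,
while `L(x) = R(x) + ad x` and `ad x` maps `Cⁱ` into `Cⁱ⁺¹`. Hence if `R(x)ᴺ = 0`, then
`L(x)ᴺ ≡ R(x)ᴺ = 0` modulo `Cⁱ⁺¹` on `Cⁱ`, so `L(x)ᴺ` lowers the filtration and `L(x)` is
nilpotent because the lower central series reaches `0`.
-/

namespace Module.End

variable {R M : Type*} [CommRing R] [AddCommGroup M] [Module R M]
  {F : ℕ → Submodule R M} {D E : Module.End R M}

theorem pow_add_apply_sub_pow_apply_mem (hF : ∀ i, F (i + 1) ≤ F i)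
    (hD : ∀ i, ∀ v ∈ F i, D v ∈ F i) (hE : ∀ i, ∀ v ∈ F i, E v ∈ F (i + 1))
    {i : ℕ} {v : M} (hv : v ∈ F i) (j : ℕ) : ((D + E) ^ j) v - (D ^ j) v ∈ F (i + 1) := by
  have hDE : ∀ w ∈ F i, (D + E) w ∈ F i := fun w hw =>
    add_mem (hD i w hw) (hF i (hE i w hw))
  induction j with
  | zero => simp
  | succ j ih =>
    have hsplit : ((D + E) ^ (j + 1)) v - (D ^ (j + 1)) v
        = D (((D + E) ^ j) v - (D ^ j) v) + E (((D + E) ^ j) v) := by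
      rw [pow_succ', pow_succ', mul_apply, mul_apply, map_sub, LinearMap.add_apply]
      abel
    rw [hsplit]
    exact add_mem (hD _ _ ih) (hE i _ (pow_apply_mem_of_forall_mem j hDE v hv))

theorem isNilpotent_add_of_filtration (hF : ∀ i, F (i + 1) ≤ F i) (hF₀ : F 0 = ⊤)
    {n : ℕ} (hFn : F n = ⊥) (hD : ∀ i, ∀ v ∈ F i, D v ∈ F i)
    (hE : ∀ i, ∀ v ∈ F i, E v ∈ F (i + 1))
    (hDnil : IsNilpotent D) : IsNilpotent (D + E) := by
  obtain ⟨N, hN⟩ := hDnil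
  have hlower : ∀ i, ∀ v ∈ F i, ((D + E) ^ N) v ∈ F (i + 1) := fun i v hv => by
    simpa [hN] using pow_add_apply_sub_pow_apply_mem hF hD hE hv N
  have hiter : ∀ m (v : M), ((D + E) ^ (N * m)) v ∈ F m := by
    intro m
    induction m with
    | zero => simp [hF₀]
    | succ m ih =>
      intro v
      rw [mul_add_one, add_comm (N * m), pow_add, mul_apply]
      exact hlower m _ (ih v)
  refine ⟨N * n, LinearMap.ext fun v => ?_⟩
  simpa [hFn] using hiter n v

end Module.End

namespace LieModule

variable {R L M : Type*} [CommRing R] [LieRing L] [LieAlgebra R L] [AddCommGroup M] [Module R M]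
  [LieRingModule L M]

theorem lie_mem_lowerCentralSeries_succ (x : L) {m : M} {i : ℕ}
    (hm : m ∈ lowerCentralSeries R L M i) : ⁅x, m⁆ ∈ lowerCentralSeries R L M (i + 1) := by
  rw [lowerCentralSeries_succ]
  exact LieSubmodule.lie_mem_lie (LieSubmodule.mem_top x) hm

end LieModule

namespace LieDerivation

open LieModule

variable {R L : Type*} [CommRing R] [LieRing L] [LieAlgebra R L]

theorem apply_mem_lowerCentralSeries (D : LieDerivation R L L) :
    ∀ (i : ℕ), ∀ x ∈ lowerCentralSeries R L L i, D x ∈ lowerCentralSeries R L L i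
  | 0, _, _ => LieSubmodule.mem_top _
  | i + 1, x, hx => by
    rw [← LieSubmodule.mem_toSubmodule, lowerCentralSeries_succ,
      LieSubmodule.lieIdeal_oper_eq_linear_span'] at hx
    refine Submodule.span_le (p := (Submodule.comap (D : L →ₗ[R] L) _)).2 ?_ hx
    rintro _ ⟨z, -, y, hy, rfl⟩
    rw [SetLike.mem_coe, Submodule.mem_comap, coeFn_coe, apply_lie_eq_add,
      LieSubmodule.mem_toSubmodule]
    exact add_mem (lie_mem_lowerCentralSeries_succ z (apply_mem_lowerCentralSeries D i y hy))
      (lie_mem_lowerCentralSeries_succ _ hy)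

end LieDerivation

def lrRightMulDerivation {k g : Type*} [CommRing k] [LieRing g] [LieAlgebra k g]
    (mul : g →ₗ[k] g →ₗ[k] g)
    (hL : ∀ x y z : g, mul x (mul y z) = mul y (mul x z))
    (hR : ∀ x y z : g, mul (mul x y) z = mul (mul x z) y)
    (hcompat : ∀ x y : g, mul x y - mul y x = ⁅x, y⁆) (x : g) : LieDerivation k g g where
  toLinearMap := mul.flip x
  leibniz' z v := by
    simp only [LinearMap.flip_apply, ← hcompat, map_sub, hR z v x, hR v z x, hL v z x]
    abel

theorem lr_L_nilpotent_of_R_nilpotent_general {k g : Type*} [Field k]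
    [LieRing g] [LieAlgebra k g]
    [LieRing.IsNilpotent g]
    (mul : g →ₗ[k] g →ₗ[k] g)
    (hL : ∀ x y z : g, mul x (mul y z) = mul y (mul x z))
    (hR : ∀ x y z : g, mul (mul x y) z = mul (mul x z) y)
    (hcompat : ∀ x y : g, mul x y - mul y x = ⁅x, y⁆)
    (hRnil : ∀ x : g, IsNilpotent (mul.flip x : Module.End k g)) :
    ∀ x : g, IsNilpotent (mul x : Module.End k g) := by
  intro x
  obtain ⟨n, hn⟩ := LieModule.IsNilpotent.nilpotent k g g
  have hsplit : (mul x : Module.End k g) = mul.flip x + LieModule.toEnd k g g x := by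
    ext v
    simp [← hcompat]
  rw [hsplit]
  exact Module.End.isNilpotent_add_of_filtration
    (F := fun i => (LieModule.lowerCentralSeries k g g i).toSubmodule)
    (fun i => LieModule.antitone_lowerCentralSeries k g g i.le_succ) (by simp)
    (hFn := (LieSubmodule.toSubmodule_eq_bot _).2 hn)
    (lrRightMulDerivation mul hL hR hcompat x).apply_mem_lowerCentralSeries
    (fun _ _ => LieModule.lie_mem_lowerCentralSeries_succ x) (hRnil x)

/-- For an LR-structure on a nilpotent Lie algebra, if all right
multiplications are nilpotent then all left multiplications are nilpotent. -/
theorem lr_L_nilpotent_of_R_nilpotent {k g : Type*} [Field k] [CharZero k]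
    [LieRing g] [LieAlgebra k g] [FiniteDimensional k g]
    [LieRing.IsNilpotent g]
    (mul : g →ₗ[k] g →ₗ[k] g)
    (hL : ∀ x y z : g, mul x (mul y z) = mul y (mul x z))
    (hR : ∀ x y z : g, mul (mul x y) z = mul (mul x z) y)
    (hcompat : ∀ x y : g, mul x y - mul y x = ⁅x, y⁆)
    (hRnil : ∀ x : g, IsNilpotent (mul.flip x : Module.End k g)) :
    ∀ x : g, IsNilpotent (mul x : Module.End k g) :=
  lr_L_nilpotent_of_R_nilpotent_general mul hL hR hcompat hRnil
end

section
/- Let (A,·) be an LR-structure on a finite-dimensional nilpotent Lie algebra g over a field of characteristic zero. If all left multiplications L(x) are nilpotent, then all right multiplications R(x) are nilpotent. -/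
/-!
The upper central series `0 = Z₀ ≤ Z₁ ≤ ⋯ ≤ Z_c = g` of the nilpotent Lie algebra `g` is
stable under every left multiplication `L(y)`, by the identity
`⁅x, y·v⁆ = y·⁅x, v⁆ - ⁅y·x, v⁆`, while `ad x` maps `Z_{i+1}` into `Z_i`. Since
`R(x) = L(x) - ad x`, the operators `R(x)^N` and `L(x)^N` agree on `Z_{i+1}` modulo `Z_i`; so if
`L(x)^N = 0` then `R(x)^N` lowers the series by one step and `R(x)^(N c) = 0`.
-/

namespace Module.End

variable {R M : Type*} [CommRing R] [AddCommGroup M] [Module R M]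

theorem pow_add_apply_sub_pow_apply_mem_s9 {p q : Submodule R M} {A B : Module.End R M}
    (hpq : p ≤ q) (hAp : Set.MapsTo A p p) (hAq : Set.MapsTo A q q) (hB : Set.MapsTo B q p)
    (j : ℕ) {v : M} (hv : v ∈ q) : ((A + B) ^ j) v - (A ^ j) v ∈ p := by
  induction j with
  | zero => simp
  | succ j ih =>
    have hAjv : (A ^ j) v ∈ q := by rw [pow_apply]; exact hAq.iterate j hv
    have split : ((A + B) ^ (j + 1)) v - (A ^ (j + 1)) v =
        (A + B) (((A + B) ^ j) v - (A ^ j) v) + B ((A ^ j) v) := by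
      simp only [pow_succ', mul_apply, map_sub, LinearMap.add_apply]
      abel
    rw [split]
    exact add_mem (add_mem (hAp ih) (hB (hpq ih))) (hB hAjv)

theorem mapsTo_pow_add_of_pow_eq_zero {p q : Submodule R M} {A B : Module.End R M} {N : ℕ}
    (hA : A ^ N = 0) (hpq : p ≤ q) (hAp : Set.MapsTo A p p) (hAq : Set.MapsTo A q q)
    (hB : Set.MapsTo B q p) : Set.MapsTo ((A + B) ^ N) q p := by
  intro v hv
  simpa [hA] using pow_add_apply_sub_pow_apply_mem_s9 hpq hAp hAq hB N hv

theorem pow_eq_zero_of_mapsTo_succ {T : Module.End R M} {Z : ℕ → Submodule R M} {c : ℕ}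
    (h0 : Z 0 = ⊥) (hc : Z c = ⊤) (hT : ∀ i, Set.MapsTo T (Z (i + 1)) (Z i)) : T ^ c = 0 := by
  have vanish : ∀ i, ∀ v ∈ Z i, (T ^ i) v = 0 := by
    intro i
    induction i with
    | zero => simp [h0]
    | succ i ih =>
      intro v hv
      rw [pow_succ, mul_apply]
      exact ih _ (hT i hv)
  ext v
  exact vanish c v (hc ▸ Submodule.mem_top)

end Module.End

section LRStructure

variable {R L : Type*} [CommRing R] [LieRing L] [LieAlgebra R L]

theorem lie_mul_eq_mul_lie_sub (mul : L →ₗ[R] L →ₗ[R] L)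
    (hL : ∀ x y z : L, mul x (mul y z) = mul y (mul x z))
    (hR : ∀ x y z : L, mul (mul x y) z = mul (mul x z) y)
    (hcompat : ∀ x y : L, mul x y - mul y x = ⁅x, y⁆) (x y v : L) :
    ⁅x, mul y v⁆ = mul y ⁅x, v⁆ - ⁅mul y x, v⁆ := by
  rw [← hcompat, ← hcompat, ← hcompat, map_sub, hL x y v, hR y v x, hL y v x]
  abel

theorem flip_eq_add_neg_ad (mul : L →ₗ[R] L →ₗ[R] L)
    (hcompat : ∀ x y : L, mul x y - mul y x = ⁅x, y⁆) (x : L) :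
    mul.flip x = mul x + -LieAlgebra.ad R L x := by
  ext v
  simp [← hcompat x v]

theorem mapsTo_mul_ucs (mul : L →ₗ[R] L →ₗ[R] L)
    (hL : ∀ x y z : L, mul x (mul y z) = mul y (mul x z))
    (hR : ∀ x y z : L, mul (mul x y) z = mul (mul x z) y)
    (hcompat : ∀ x y : L, mul x y - mul y x = ⁅x, y⁆) (i : ℕ) (y : L) :
    Set.MapsTo (mul y) ((⊥ : LieSubmodule R L L).ucs i) ((⊥ : LieSubmodule R L L).ucs i) := by
  induction i generalizing y with
  | zero => simp [Set.MapsTo]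
  | succ i ih =>
    intro v hv
    simp only [SetLike.mem_coe, LieSubmodule.ucs_succ, LieSubmodule.mem_normalizer] at hv ⊢
    intro x
    rw [lie_mul_eq_mul_lie_sub mul hL hR hcompat]
    exact sub_mem (ih y (hv x)) (hv (mul y x))

theorem mapsTo_ad_ucs_succ (x : L) (i : ℕ) :
    Set.MapsTo (LieAlgebra.ad R L x) ((⊥ : LieSubmodule R L L).ucs (i + 1))
      ((⊥ : LieSubmodule R L L).ucs i) := by
  intro v hv
  rw [SetLike.mem_coe, LieSubmodule.ucs_succ, LieSubmodule.mem_normalizer] at hv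
  exact hv x

end LRStructure

theorem lr_R_nilpotent_of_L_nilpotent_general {k g : Type*} [Field k]
    [LieRing g] [LieAlgebra k g]
    [LieRing.IsNilpotent g]
    (mul : g →ₗ[k] g →ₗ[k] g)
    (hL : ∀ x y z : g, mul x (mul y z) = mul y (mul x z))
    (hR : ∀ x y z : g, mul (mul x y) z = mul (mul x z) y)
    (hcompat : ∀ x y : g, mul x y - mul y x = ⁅x, y⁆)
    (hLnil : ∀ x : g, IsNilpotent (mul x : Module.End k g)) :
    ∀ x : g, IsNilpotent (mul.flip x : Module.End k g) := by
  intro x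
  obtain ⟨N, hN⟩ := hLnil x
  obtain ⟨c, hc⟩ :=
    (LieModule.isNilpotent_iff_exists_ucs_eq_top (R := k) (L := g) (M := g)).mp inferInstance
  let Z : ℕ → Submodule k g := fun i => ((⊥ : LieSubmodule k g g).ucs i).toSubmodule
  have Z_mono (i : ℕ) : Z i ≤ Z (i + 1) := by
    simp only [Z, LieSubmodule.toSubmodule_le_toSubmodule, LieSubmodule.ucs_succ]
    exact LieSubmodule.le_normalizer _
  have lower (i : ℕ) : Set.MapsTo ((mul.flip x) ^ N) (Z (i + 1)) (Z i) := by
    rw [flip_eq_add_neg_ad mul hcompat]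
    exact Module.End.mapsTo_pow_add_of_pow_eq_zero hN (Z_mono i)
      (mapsTo_mul_ucs mul hL hR hcompat i x) (mapsTo_mul_ucs mul hL hR hcompat (i + 1) x)
      (fun v hv => neg_mem (mapsTo_ad_ucs_succ x i hv))
  refine ⟨N * c, ?_⟩
  rw [pow_mul]
  exact Module.End.pow_eq_zero_of_mapsTo_succ (Z := Z) (by simp [Z])
    (by simp [Z, hc]) lower

/-- For an LR-structure on a nilpotent Lie algebra, if all left
multiplications are nilpotent then all right multiplications are nilpotent. -/
theorem lr_R_nilpotent_of_L_nilpotent {k g : Type*} [Field k] [CharZero k]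
    [LieRing g] [LieAlgebra k g] [FiniteDimensional k g]
    [LieRing.IsNilpotent g]
    (mul : g →ₗ[k] g →ₗ[k] g)
    (hL : ∀ x y z : g, mul x (mul y z) = mul y (mul x z))
    (hR : ∀ x y z : g, mul (mul x y) z = mul (mul x z) y)
    (hcompat : ∀ x y : g, mul x y - mul y x = ⁅x, y⁆)
    (hLnil : ∀ x : g, IsNilpotent (mul x : Module.End k g)) :
    ∀ x : g, IsNilpotent (mul.flip x : Module.End k g) :=
  lr_R_nilpotent_of_L_nilpotent_general mul hL hR hcompat hLnil
end

section
/- Let A be a finite-dimensional LR-algebra over an algebraically closed field of characteristic zero whose associated Lie algebra is nilpotent, and suppose the commuting family of left multiplication operators has a single weight α which is nonzero. Then A contains a nonzero idempotent element a with a·a = a. -/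
/-!
Pick `x` with `α x ≠ 0`. Then `L(x) = α x • 1 + (L(x) - α x • 1)` is a unit plus a commuting
nilpotent, hence invertible, so `x = x·e` for some `e`. Right commutativity gives
`(x·z)·e = (x·e)·z = x·z`, and since every element has the form `x·z`, `e` is a right identity;
in particular `e·e = e`, and `e ≠ 0` because `x·e = x ≠ 0`.
-/

theorem isUnit_of_isNilpotent_sub_smul_one {k R : Type*} [CommSemiring k] [Ring R] [Algebra k R]
    {f : R} {c : k} (hc : IsUnit c) (hf : IsNilpotent (f - c • 1)) : IsUnit f := by
  have hunit : IsUnit (c • (1 : R)) := by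
    rw [← Algebra.algebraMap_eq_smul_one]
    exact hc.map (algebraMap k R)
  simpa using hf.isUnit_add_left_of_commute hunit ((Commute.one_right _).smul_right c)

theorem exists_forall_mul_eq_self_of_surjective {R M : Type*} [CommSemiring R] [AddCommMonoid M]
    [Module R M] (mul : M →ₗ[R] M →ₗ[R] M)
    (hR : ∀ x y z : M, mul (mul x y) z = mul (mul x z) y)
    {x : M} (hx : Function.Surjective (mul x)) :
    ∃ e : M, ∀ w : M, mul w e = w := by
  obtain ⟨e, hxe⟩ := hx x
  refine ⟨e, fun w => ?_⟩
  obtain ⟨z, rfl⟩ := hx w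
  rw [← hR x e z, hxe]

theorem lr_exists_idempotent_general {k A : Type*} [Field k]
    [LieRing A] [LieAlgebra k A]
    (mul : A →ₗ[k] A →ₗ[k] A)
    (hR : ∀ x y z : A, mul (mul x y) z = mul (mul x z) y)
    (α : A →ₗ[k] k) (hα : α ≠ 0)
    (hweight : ∀ x : A, IsNilpotent ((mul x : Module.End k A) - α x • 1)) :
    ∃ a : A, a ≠ 0 ∧ mul a a = a := by
  obtain ⟨x, hx⟩ : ∃ x, α x ≠ 0 := not_forall.mp fun h => hα (LinearMap.ext h)
  have hunit : IsUnit (mul x : Module.End k A) :=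
    isUnit_of_isNilpotent_sub_smul_one hx.isUnit (hweight x)
  obtain ⟨e, he⟩ := exists_forall_mul_eq_self_of_surjective mul hR
    ((Module.End.isUnit_iff _).mp hunit).surjective
  refine ⟨e, ?_, he e⟩
  rintro rfl
  exact hx (by rw [← he x, map_zero, map_zero])

/-- A finite-dimensional LR-algebra over an algebraically closed field of
characteristic zero, with nilpotent associated Lie algebra, on which the
commuting left multiplications have a single nonzero weight, contains a
nonzero idempotent. -/
theorem lr_exists_idempotent {k A : Type*} [Field k] [CharZero k] [IsAlgClosed k]
    [LieRing A] [LieAlgebra k A] [FiniteDimensional k A]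
    [LieRing.IsNilpotent A]
    (mul : A →ₗ[k] A →ₗ[k] A)
    (hL : ∀ x y z : A, mul x (mul y z) = mul y (mul x z))
    (hR : ∀ x y z : A, mul (mul x y) z = mul (mul x z) y)
    (hcompat : ∀ x y : A, mul x y - mul y x = ⁅x, y⁆)
    (α : A →ₗ[k] k) (hα : α ≠ 0)
    (hweight : ∀ x : A, IsNilpotent ((mul x : Module.End k A) - α x • 1)) :
    ∃ a : A, a ≠ 0 ∧ mul a a = a :=
  lr_exists_idempotent_general mul hR α hα hweight
end

section
/- Let A be a finite-dimensional LR-algebra over an algebraically closed field of characteristic zero whose associated Lie algebra is nilpotent. If the commuting family of left multiplications has a single nonzero weight on A, then A is commutative (x·y = y·x for all x,y), and hence the associated Lie algebra is abelian. -/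
/-!
Write `L x = mul x` and `R x = mul.flip x` for the left and right multiplications. The two
LR-identities say that `L` is commutative and that `L x * R y = R (x·y)`, `R y * L x = L (x·y)`,
so `ad (L e)` intertwines `F = L - R` with `L e`: `⁅L e, F y⁆ = F (e·y)`. For `α e ≠ 0`, `L e` is
a nonzero scalar plus a nilpotent, so `ad (L e)` is nilpotent while `L e` is invertible; hence
`F ((L e)^m z) = (ad (L e))^m (F z) = 0` for large `m`, and `F = 0` because `(L e)^m` is onto.
-/

attribute [local instance 100] LieRing.ofAssociativeRing

namespace LinearMap

variable {R M : Type*} [CommRing R] [AddCommGroup M] [Module R M]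
  {mul : M →ₗ[R] M →ₗ[R] M}

theorem lie_mul_sub_flip_eq (hL : ∀ x y z : M, mul x (mul y z) = mul y (mul x z))
    (hR : ∀ x y z : M, mul (mul x y) z = mul (mul x z) y) (e y : M) :
    ⁅(mul e : Module.End R M), (mul - mul.flip) y⁆ = (mul - mul.flip) (mul e y) := by
  have hLR : (mul e : Module.End R M) * mul.flip y = mul.flip (mul e y) := by
    ext z; exact hL e z y
  have hRL : (mul.flip y : Module.End R M) * mul e = mul (mul e y) := by
    ext z; exact (hR e y z).symm
  have hLL : (mul e : Module.End R M) * mul y = mul y * mul e := by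
    ext z; exact hL e y z
  rw [Ring.lie_def, sub_apply, mul_sub, sub_mul, hLR, hRL, hLL, sub_apply]
  abel

theorem ad_pow_mul_sub_flip_eq (hL : ∀ x y z : M, mul x (mul y z) = mul y (mul x z))
    (hR : ∀ x y z : M, mul (mul x y) z = mul (mul x z) y) (e : M) (n : ℕ) (y : M) :
    (LieAlgebra.ad R (Module.End R M) (mul e) ^ n) ((mul - mul.flip) y) =
      (mul - mul.flip) (((mul e : Module.End R M) ^ n) y) := by
  induction n generalizing y with
  | zero => rfl
  | succ n ih =>
    rw [pow_succ, Module.End.mul_apply, LieAlgebra.ad_apply, lie_mul_sub_flip_eq hL hR, ih,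
      pow_succ, Module.End.mul_apply]

theorem flip_eq_self_of_isNilpotent_sub_smul_one
    (hL : ∀ x y z : M, mul x (mul y z) = mul y (mul x z))
    (hR : ∀ x y z : M, mul (mul x y) z = mul (mul x z) y) {e : M} {c : R} (hc : IsUnit c)
    (hnil : IsNilpotent ((mul e : Module.End R M) - c • 1)) :
    mul.flip = mul := by
  have hunit : IsUnit (mul e : Module.End R M) := by
    have hscalar : IsUnit (c • 1 : Module.End R M) :=
      Algebra.algebraMap_eq_smul_one (A := Module.End R M) c ▸ hc.map (algebraMap R _)
    simpa using hnil.isUnit_add_left_of_commute hscalar ((Commute.one_right _).smul_right c)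
  have had : LieAlgebra.ad R (Module.End R M) (mul e) =
      LieAlgebra.ad R (Module.End R M) ((mul e : Module.End R M) - c • 1) := by
    ext T; simp [Ring.lie_def]
  obtain ⟨m, hm⟩ := had ▸ LieAlgebra.ad_nilpotent_of_nilpotent hnil
  have hsurj : Function.Surjective ((mul e : Module.End R M) ^ m) :=
    ((Module.End.isUnit_iff _).mp (hunit.pow m)).surjective
  ext y z
  obtain ⟨w, rfl⟩ := hsurj y
  have hzero := ad_pow_mul_sub_flip_eq hL hR e m w
  rw [hm, zero_apply, eq_comm, sub_apply, sub_eq_zero] at hzero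
  rw [← hzero]

end LinearMap

theorem lr_single_weight_commutative_general {k A : Type*} [Field k]
    [LieRing A] [LieAlgebra k A]
    (mul : A →ₗ[k] A →ₗ[k] A)
    (hL : ∀ x y z : A, mul x (mul y z) = mul y (mul x z))
    (hR : ∀ x y z : A, mul (mul x y) z = mul (mul x z) y)
    (hcompat : ∀ x y : A, mul x y - mul y x = ⁅x, y⁆)
    (α : A →ₗ[k] k) (hα : α ≠ 0)
    (hweight : ∀ x : A, IsNilpotent ((mul x : Module.End k A) - α x • 1)) :
    (∀ x y : A, mul x y = mul y x) ∧ ∀ x y : A, ⁅x, y⁆ = 0 := by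
  obtain ⟨e, he⟩ : ∃ e, α e ≠ 0 := by
    by_contra! h
    exact hα (LinearMap.ext h)
  have hflip := LinearMap.flip_eq_self_of_isNilpotent_sub_smul_one hL hR he.isUnit (hweight e)
  have hcomm (x y : A) : mul x y = mul y x := by
    simpa using LinearMap.congr_fun₂ hflip y x
  exact ⟨hcomm, fun x y => by rw [← hcompat, hcomm, sub_self]⟩

/-- A finite-dimensional LR-algebra over an algebraically closed field of
characteristic zero, with nilpotent associated Lie algebra, on which the
left multiplications have a single nonzero weight, is commutative; hence
the associated Lie algebra is abelian. -/
theorem lr_single_weight_commutative {k A : Type*} [Field k] [CharZero k] [IsAlgClosed k]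
    [LieRing A] [LieAlgebra k A] [FiniteDimensional k A]
    [LieModule.IsNilpotent A A]
    (mul : A →ₗ[k] A →ₗ[k] A)
    (hL : ∀ x y z : A, mul x (mul y z) = mul y (mul x z))
    (hR : ∀ x y z : A, mul (mul x y) z = mul (mul x z) y)
    (hcompat : ∀ x y : A, mul x y - mul y x = ⁅x, y⁆)
    (α : A →ₗ[k] k) (hα : α ≠ 0)
    (hweight : ∀ x : A, IsNilpotent ((mul x : Module.End k A) - α x • 1)) :
    (∀ x y : A, mul x y = mul y x) ∧ ∀ x y : A, ⁅x, y⁆ = 0 :=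
  lr_single_weight_commutative_general mul hL hR hcompat α hα hweight
end

section
/- In an LR-algebra A with nonzero idempotent a such that L(a) is invertible, the element a is a right identity of A (x·a = x for all x ∈ A), and consequently A is commutative. -/
section RightIdentity

variable {A : Type*} (mul : A → A → A)

/-- Every `x = a·w` satisfies `x·a = (a·a)·w = x` by right commutativity. -/
theorem mul_eq_self_of_idempotent_of_surjective
    (hR : ∀ x y z : A, mul (mul x y) z = mul (mul x z) y)
    {a : A} (hidem : mul a a = a) (hsurj : Function.Surjective (mul a)) (x : A) :
    mul x a = x := by
  obtain ⟨w, rfl⟩ := hsurj x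
  rw [hR, hidem]

theorem mul_comm_of_right_identity
    (hL : ∀ x y z : A, mul x (mul y z) = mul y (mul x z))
    {a : A} (hrid : ∀ x : A, mul x a = x) (x y : A) :
    mul x y = mul y x :=
  calc mul x y = mul x (mul y a) := by rw [hrid]
    _ = mul y (mul x a) := hL x y a
    _ = mul y x := by rw [hrid]

end RightIdentity

theorem lr_idempotent_right_identity_general {k A : Type*} [Field k]
    [AddCommGroup A] [Module k A]
    (mul : A →ₗ[k] A →ₗ[k] A)
    (hL : ∀ x y z : A, mul x (mul y z) = mul y (mul x z))
    (hR : ∀ x y z : A, mul (mul x y) z = mul (mul x z) y)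
    (a : A) (hidem : mul a a = a)
    (hinv : IsUnit (mul a : Module.End k A)) :
    (∀ x : A, mul x a = x) ∧ ∀ x y : A, mul x y = mul y x := by
  have hsurj : Function.Surjective (mul a) := ((Module.End.isUnit_iff _).mp hinv).surjective
  have hrid : ∀ x : A, mul x a = x :=
    mul_eq_self_of_idempotent_of_surjective (fun x y => mul x y) hR hidem hsurj
  exact ⟨hrid, mul_comm_of_right_identity (fun x y => mul x y) hL hrid⟩

/-- In an LR-algebra with a nonzero idempotent `a` such that `L(a)` is
invertible, `a` is a right identity and the algebra is commutative. -/
theorem lr_idempotent_right_identity {k A : Type*} [Field k] [CharZero k]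
    [AddCommGroup A] [Module k A]
    (mul : A →ₗ[k] A →ₗ[k] A)
    (hL : ∀ x y z : A, mul x (mul y z) = mul y (mul x z))
    (hR : ∀ x y z : A, mul (mul x y) z = mul (mul x z) y)
    (a : A) (ha : a ≠ 0) (hidem : mul a a = a)
    (hinv : IsUnit (mul a : Module.End k A)) :
    (∀ x : A, mul x a = x) ∧ ∀ x y : A, mul x y = mul y x :=
  lr_idempotent_right_identity_general mul hL hR a hidem hinv
end

section
/- Let g be a finite-dimensional nilpotent Lie algebra over a field of characteristic zero. If g admits an LR-structure, then g admits a complete LR-structure, i.e. one in which all right multiplication operators are nilpotent. Moreover the complete LR-product ∘ can be chosen with g∘g ⊆ g·g, where · is the original LR-product. -/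
/-!
Induction on the dimension. Since `g` is nilpotent, every `ad x = L x - R x` is nilpotent.
If some right multiplication `a = R y` is not nilpotent, its Fitting decomposition
`V = A ⊕ B` (`A = ker aⁿ`, `B = range aⁿ`) consists of right ideals, since right
multiplications commute; `A · B = 0`, and `B ⊆ range a` is commutative because
`(u·y)·(v·y) = (u·(v·y))·y` is symmetric in `u, v`. The proper subalgebra `A` carries, by
induction, a complete LR-product `∘` with the same commutators and `A ∘ A ⊆ A · A`; then
`x ∘ y := πx ∘ πy + (x - πx) · πy`, with `π` the projection onto `A` along `B`, is the
required product on `V`. Left-symmetry uses `B · (A · A) = 0`. The right multiplications of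
`∘` on `V` act on `A` by those of `∘` on `A` and on `B` by `R (πy)`, which is nilpotent there
because `L (πy)` vanishes on `B`, so that `R (πy) = -ad (πy)` on `B`.
-/

open Module Submodule LinearMap

theorem Module.End.isNilpotent_of_codisjoint {R M : Type*} [Semiring R] [AddCommMonoid M]
    [Module R M] {f : End R M} {p q : Submodule R M} (hpq : Codisjoint p q)
    (hp : ∀ x ∈ p, f x ∈ p) (hq : ∀ x ∈ q, f x ∈ q)
    (hfp : IsNilpotent (f.restrict hp)) (hfq : IsNilpotent (f.restrict hq)) :
    IsNilpotent f := by
  have pow_apply_eq_zero {r : Submodule R M} (hr : ∀ x ∈ r, f x ∈ r) {n : ℕ}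
      (hn : f.restrict hr ^ n = 0) (x : M) (hx : x ∈ r) : (f ^ n) x = 0 := by
    rw [Module.End.pow_restrict] at hn
    simpa using congr_arg Subtype.val (LinearMap.congr_fun hn ⟨x, hx⟩)
  obtain ⟨m, hm⟩ := hfp
  obtain ⟨n, hn⟩ := hfq
  refine ⟨m + n, ker_eq_top.mp (eq_top_iff.mpr (hpq.top_le.trans (sup_le ?_ ?_)))⟩
  · intro x hx
    rw [mem_ker, add_comm, pow_add, Module.End.mul_apply, pow_apply_eq_zero hp hm x hx, map_zero]
  · intro x hx
    rw [mem_ker, pow_add, Module.End.mul_apply, pow_apply_eq_zero hq hn x hx, map_zero]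

section

variable {k V : Type*} [Field k] [AddCommGroup V] [Module k V]

structure IsLRProduct_s14 (mul : V →ₗ[k] V →ₗ[k] V) : Prop where
  left_comm : ∀ x y z, mul x (mul y z) = mul y (mul x z)
  right_comm : ∀ x y z, mul (mul x y) z = mul (mul x z) y

namespace IsLRProduct_s14

variable {mul : V →ₗ[k] V →ₗ[k] V}

theorem commute_flip (h : IsLRProduct_s14 mul) (y z : V) : Commute (mul.flip y) (mul.flip z) :=
  LinearMap.ext fun x => (h.right_comm x y z).symm

theorem flip_mul (h : IsLRProduct_s14 mul) (x y : V) : mul.flip (mul x y) = mul x * mul.flip y :=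
  LinearMap.ext fun z => h.left_comm z x y

theorem mul_comm_of_mem_range (h : IsLRProduct_s14 mul) {y u v : V} (hu : u ∈ range (mul.flip y))
    (hv : v ∈ range (mul.flip y)) : mul u v = mul v u := by
  obtain ⟨u, rfl⟩ := hu
  obtain ⟨v, rfl⟩ := hv
  simp only [flip_apply]
  rw [h.right_comm, h.left_comm, ← h.right_comm]

theorem mul_pow_succ_apply (h : IsLRProduct_s14 mul) (y u w : V) (n : ℕ) :
    mul u ((mul.flip y ^ (n + 1)) w) = (mul.flip y ^ n) (mul w (mul u y)) := by
  have key : mul u * mul.flip y ^ (n + 1) = mul.flip y ^ n * mul.flip (mul u y) := by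
    rw [pow_succ', ← mul_assoc, ← h.flip_mul, ((h.commute_flip _ y).pow_right n).eq]
  exact LinearMap.congr_fun key w

end IsLRProduct_s14

variable (mul : V →ₗ[k] V →ₗ[k] V) in
structure IsLRSplitting (A B : Submodule k V) : Prop where
  isCompl : IsCompl A B
  mul_mem_left : ∀ z, ∀ u ∈ A, mul u z ∈ A
  mul_mem_right : ∀ z, ∀ v ∈ B, mul v z ∈ B
  mul_eq_zero : ∀ u ∈ A, ∀ v ∈ B, mul u v = 0
  mul_comm : ∀ u ∈ B, ∀ v ∈ B, mul u v = mul v u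

variable {mul : V →ₗ[k] V →ₗ[k] V}

theorem IsLRProduct_s14.exists_isLRSplitting [FiniteDimensional k V] (h : IsLRProduct_s14 mul) {y : V}
    (hy : ¬IsNilpotent (mul.flip y)) : ∃ A B, IsLRSplitting mul A B ∧ A ≠ ⊤ := by
  set a := mul.flip y
  -- The exponent `n + 1 ≥ 1` puts `B` inside `range a`; as the range is stable, `B = aB`.
  obtain ⟨n, hcompl, hrange⟩ : ∃ n, IsCompl (ker (a ^ (n + 1))) (range (a ^ (n + 1))) ∧
      range (a ^ (n + 1)) ≤ range (a ^ (n + 2)) := by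
    obtain ⟨N, hN⟩ := Filter.eventually_atTop.mp
      (a.eventually_isCompl_ker_pow_range_pow.and a.eventually_iInf_range_pow_eq)
    refine ⟨N, (hN (N + 1) (by omega)).1, ?_⟩
    rw [← (hN (N + 1) (by omega)).2, ← (hN (N + 2) (by omega)).2]
  have comm_pow (z : V) (x : V) : (a ^ (n + 1)) (mul x z) = mul ((a ^ (n + 1)) x) z :=
    LinearMap.congr_fun (((h.commute_flip y z).pow_left (n + 1)).eq) x
  have mul_mem_left (z : V) (u : V) (hu : u ∈ ker (a ^ (n + 1))) :
      mul u z ∈ ker (a ^ (n + 1)) := by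
    rw [mem_ker, comm_pow, mem_ker.mp hu, map_zero, LinearMap.zero_apply]
  refine ⟨_, _, ⟨hcompl, mul_mem_left, ?_, ?_, ?_⟩,
    fun htop => hy ⟨n + 1, ker_eq_top.mp htop⟩⟩
  · rintro z _ ⟨w, rfl⟩
    exact ⟨mul w z, comm_pow z w⟩
  · intro u hu v hv
    obtain ⟨w, rfl⟩ := hrange hv
    refine disjoint_def.mp hcompl.disjoint _ (mul_mem_left _ u hu) ?_
    rw [h.mul_pow_succ_apply]
    exact mem_range_self _ _
  · have hle : range (a ^ (n + 1)) ≤ range a := by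
      rw [pow_succ', Module.End.mul_eq_comp]
      exact range_comp_le_range _ _
    exact fun u hu v hv => h.mul_comm_of_mem_range (hle hu) (hle hv)

section Restrict

variable {A : Submodule k V}

variable (mul) in
noncomputable def restrictProduct (hA : ∀ u ∈ A, ∀ v ∈ A, mul u v ∈ A) :
    A →ₗ[k] A →ₗ[k] A :=
  (mul.domRestrict₁₂ A A).codRestrict₂ A.subtype A.injective_subtype
    fun u v => by simpa [domRestrict₁₂_apply] using hA u u.2 v v.2

variable (hA : ∀ u ∈ A, ∀ v ∈ A, mul u v ∈ A)

@[simp]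
theorem coe_restrictProduct (u v : A) : (restrictProduct mul hA u v : V) = mul u v :=
  codRestrict₂_apply (mul.domRestrict₁₂ A A) A.subtype _ _ u v

theorem IsLRProduct_s14.restrictProduct (h : IsLRProduct_s14 mul) :
    IsLRProduct_s14 (restrictProduct mul hA) where
  left_comm x y z := Subtype.ext <| by simpa using h.left_comm x y z
  right_comm x y z := Subtype.ext <| by simpa using h.right_comm x y z

theorem isNilpotent_restrictProduct_sub_flip {x : A} (hx : IsNilpotent (mul x - mul.flip x)) :
    IsNilpotent (restrictProduct mul hA x - (restrictProduct mul hA).flip x) := by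
  have hmaps : ∀ u ∈ A, (mul x - mul.flip x) u ∈ A := fun u hu =>
    sub_mem (hA x x.2 u hu) (hA u hu x x.2)
  convert Module.End.isNilpotent.restrict hmaps hx using 1
  ext u
  simp

theorem map₂_restrictProduct_le :
    map₂ (restrictProduct mul hA) ⊤ ⊤ ≤ (map₂ mul A A).comap A.subtype :=
  map₂_le.mpr fun u _ v _ => by simpa using apply_mem_map₂ mul u.2 v.2

end Restrict

namespace IsLRSplitting

variable {A B : Submodule k V}

theorem mul_apply_eq_zero_of_mem_map₂ (s : IsLRSplitting mul A B) (h : IsLRProduct_s14 mul) {w : V}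
    (hw : w ∈ B) {ζ : V} (hζ : ζ ∈ map₂ mul A A) : mul w ζ = 0 := by
  suffices map₂ mul A A ≤ ker (mul w) from this hζ
  refine map₂_le.mpr fun c hc d _ => ?_
  rw [mem_ker, h.left_comm, s.mul_eq_zero c hc _ (s.mul_mem_right d w hw)]

theorem isNilpotent_restrict_flip (s : IsLRSplitting mul A B) {z : V} (hz : z ∈ A)
    (had : IsNilpotent (mul z - mul.flip z)) :
    IsNilpotent ((mul.flip z).restrict (s.mul_mem_right z)) := by
  have hmaps : ∀ v ∈ B, (mul z - mul.flip z) v ∈ B := fun v hv => by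
    simpa [s.mul_eq_zero z hz v hv] using s.mul_mem_right z v hv
  have : (mul.flip z).restrict (s.mul_mem_right z) = -(mul z - mul.flip z).restrict hmaps := by
    ext v
    simp [s.mul_eq_zero z hz v v.2]
    rfl
  rw [this]
  exact (Module.End.isNilpotent.restrict hmaps had).neg

variable (s : IsLRSplitting mul A B) (m : A →ₗ[k] A →ₗ[k] A)

noncomputable def glue : V →ₗ[k] V →ₗ[k] V :=
  (m.compl₁₂ (A.projectionOnto B s.isCompl) (A.projectionOnto B s.isCompl)).compr₂ A.subtype +
    mul.compl₁₂ (B.projection A s.isCompl.symm) (A.projection B s.isCompl)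

theorem glue_apply (x y : V) : s.glue m x y =
    m (A.projectionOnto B s.isCompl x) (A.projectionOnto B s.isCompl y) +
      mul (B.projection A s.isCompl.symm x) (A.projection B s.isCompl y) :=
  rfl

theorem projectionOnto_glue (x y : V) : A.projectionOnto B s.isCompl (s.glue m x y) =
    m (A.projectionOnto B s.isCompl x) (A.projectionOnto B s.isCompl y) := by
  rw [glue_apply, map_add, projectionOnto_apply_left,
    projectionOnto_apply_of_mem_right _ (s.mul_mem_right _ _ (projection_apply_mem _ x)), add_zero]

theorem projection_glue (x y : V) : B.projection A s.isCompl.symm (s.glue m x y) =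
    mul (B.projection A s.isCompl.symm x) (A.projection B s.isCompl y) := by
  rw [glue_apply, map_add, projection_apply_of_mem_right _ (m _ _).2, zero_add,
    projection_apply_of_mem_left _ (s.mul_mem_right _ _ (projection_apply_mem _ x))]

variable {m}

theorem isLRProduct_glue (h : IsLRProduct_s14 mul) (hm : IsLRProduct_s14 m)
    (hmA : ∀ u v, (m u v : V) ∈ map₂ mul A A) : IsLRProduct_s14 (s.glue m) where
  left_comm x y z := by
    have glue_glue (x y z : V) : s.glue m x (s.glue m y z) = m (A.projectionOnto B s.isCompl x)
        (m (A.projectionOnto B s.isCompl y) (A.projectionOnto B s.isCompl z)) := by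
      rw [glue_apply, projectionOnto_glue, ← coe_projectionOnto_apply s.isCompl (s.glue m y z),
        projectionOnto_glue,
        s.mul_apply_eq_zero_of_mem_map₂ h (projection_apply_mem _ x) (hmA _ _), add_zero]
    rw [glue_glue, glue_glue, hm.left_comm]
  right_comm x y z := by
    rw [glue_apply, glue_apply (x := s.glue m x z), projectionOnto_glue, projectionOnto_glue,
      projection_glue, projection_glue, hm.right_comm, h.right_comm]

theorem glue_sub_glue (hm : ∀ u v : A, (m u v : V) - m v u = mul u v - mul v u) (x y : V) :
    s.glue m x y - s.glue m y x = mul x y - mul y x := by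
  have expand (x y : V) : mul x y = mul (A.projection B s.isCompl x) (A.projection B s.isCompl y) +
      mul (B.projection A s.isCompl.symm x) (A.projection B s.isCompl y) +
      mul (B.projection A s.isCompl.symm x) (B.projection A s.isCompl.symm y) := by
    conv_lhs => rw [← projection_add_projection_eq_self s.isCompl x,
      ← projection_add_projection_eq_self s.isCompl y]
    simp only [map_add, LinearMap.add_apply]
    rw [s.mul_eq_zero _ (projection_apply_mem _ x) _ (projection_apply_mem _ y)]
    abel
  rw [expand x y, expand y x, s.mul_comm _ (projection_apply_mem _ x) _ (projection_apply_mem _ y),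
    glue_apply, glue_apply]
  have hmxy := hm (A.projectionOnto B s.isCompl x) (A.projectionOnto B s.isCompl y)
  simp only [coe_projectionOnto_apply] at hmxy
  linear_combination (norm := abel) hmxy

theorem isNilpotent_glue_flip (hm : ∀ u, IsNilpotent (m.flip u))
    (hB : ∀ z ∈ A, IsNilpotent ((mul.flip z).restrict (s.mul_mem_right z))) (y : V) :
    IsNilpotent ((s.glue m).flip y) := by
  have mapsTo_left : ∀ u ∈ A, (s.glue m).flip y u ∈ A := fun u hu => by
    simp [glue_apply, projection_apply_of_mem_right _ hu]
  have mapsTo_right : ∀ v ∈ B, (s.glue m).flip y v ∈ B := fun v hv => by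
    simpa [glue_apply, projectionOnto_apply_of_mem_right _ hv, projection_apply_of_mem_left _ hv]
      using s.mul_mem_right _ v hv
  refine Module.End.isNilpotent_of_codisjoint s.isCompl.codisjoint mapsTo_left mapsTo_right ?_ ?_
  · convert hm (A.projectionOnto B s.isCompl y) using 1
    ext u
    simp [glue_apply, projection_apply_of_mem_right _ u.2]
  · convert hB _ (projection_apply_mem s.isCompl y) using 1
    ext v
    simp [glue_apply, projectionOnto_apply_of_mem_right _ v.2, projection_apply_of_mem_left _ v.2]
    rfl

theorem map₂_glue_le (hmA : ∀ u v, (m u v : V) ∈ map₂ mul A A) :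
    map₂ (s.glue m) ⊤ ⊤ ≤ map₂ mul ⊤ ⊤ :=
  map₂_le.mpr fun _ _ _ _ => add_mem (map₂_le_map₂ le_top le_top (hmA _ _))
    (apply_mem_map₂ _ mem_top mem_top)

end IsLRSplitting

theorem IsLRProduct_s14.exists_complete [FiniteDimensional k V] (h : IsLRProduct_s14 mul)
    (had : ∀ x, IsNilpotent (mul x - mul.flip x)) :
    ∃ mul' : V →ₗ[k] V →ₗ[k] V, IsLRProduct_s14 mul' ∧
      (∀ x y, mul' x y - mul' y x = mul x y - mul y x) ∧ (∀ y, IsNilpotent (mul'.flip y)) ∧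
      map₂ mul' ⊤ ⊤ ≤ map₂ mul ⊤ ⊤ := by
  induction hn : finrank k V using Nat.strong_induction_on generalizing V with
  | _ n ih =>
    by_cases hcomplete : ∀ y, IsNilpotent (mul.flip y)
    · exact ⟨mul, h, fun _ _ => rfl, hcomplete, le_rfl⟩
    obtain ⟨y, hy⟩ := not_forall.mp hcomplete
    obtain ⟨A, B, s, hA⟩ := h.exists_isLRSplitting hy
    have hsub : ∀ u ∈ A, ∀ v ∈ A, mul u v ∈ A := fun u hu v _ => s.mul_mem_left v u hu
    obtain ⟨m, hm, hcomm, hnil, hrange⟩ := ih _ (hn ▸ finrank_lt hA)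
      (h.restrictProduct hsub) (fun x => isNilpotent_restrictProduct_sub_flip hsub (had x)) rfl
    have hmA (u v : A) : (m u v : V) ∈ map₂ mul A A :=
      map₂_restrictProduct_le hsub (hrange (apply_mem_map₂ _ mem_top mem_top))
    refine ⟨s.glue m, s.isLRProduct_glue h hm hmA, s.glue_sub_glue fun u v => ?_,
      s.isNilpotent_glue_flip hnil fun z hz => s.isNilpotent_restrict_flip hz (had z),
      s.map₂_glue_le hmA⟩
    simpa using congr_arg Subtype.val (hcomm u v)

end

theorem lr_nilpotent_complete_general {k g : Type*} [Field k]
    [LieRing g] [LieAlgebra k g] [FiniteDimensional k g]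
    [LieRing.IsNilpotent g]
    (mul : g →ₗ[k] g →ₗ[k] g)
    (hL : ∀ x y z : g, mul x (mul y z) = mul y (mul x z))
    (hR : ∀ x y z : g, mul (mul x y) z = mul (mul x z) y)
    (hcompat : ∀ x y : g, mul x y - mul y x = ⁅x, y⁆) :
    ∃ mul' : g →ₗ[k] g →ₗ[k] g,
      (∀ x y z : g, mul' x (mul' y z) = mul' y (mul' x z)) ∧
      (∀ x y z : g, mul' (mul' x y) z = mul' (mul' x z) y) ∧
      (∀ x y : g, mul' x y - mul' y x = ⁅x, y⁆) ∧
      (∀ x : g, IsNilpotent (mul'.flip x : Module.End k g)) ∧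
      (∀ x y : g, mul' x y ∈
        Submodule.span k {z : g | ∃ a b : g, z = mul a b}) := by
  have had (x : g) : IsNilpotent (mul x - mul.flip x) := by
    convert LieModule.isNilpotent_toEnd_of_isNilpotent k g g x
    ext y
    simpa using hcompat x y
  obtain ⟨mul', ⟨hL', hR'⟩, hcomm, hnil, hrange⟩ :=
    (IsLRProduct_s14.mk hL hR).exists_complete had
  refine ⟨mul', hL', hR', fun x y => (hcomm x y).trans (hcompat x y), hnil, fun x y => ?_⟩
  have hspan : map₂ mul ⊤ ⊤ ≤ span k {z : g | ∃ a b : g, z = mul a b} :=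
    map₂_le.mpr fun a _ b _ => subset_span ⟨a, b, rfl⟩
  exact hspan (hrange (apply_mem_map₂ _ mem_top mem_top))

/-- A finite-dimensional nilpotent Lie algebra admitting an LR-structure
admits a complete LR-structure `∘` with `g∘g ⊆ g·g`. -/
theorem lr_nilpotent_complete {k g : Type*} [Field k] [CharZero k]
    [LieRing g] [LieAlgebra k g] [FiniteDimensional k g]
    [LieRing.IsNilpotent g]
    (mul : g →ₗ[k] g →ₗ[k] g)
    (hL : ∀ x y z : g, mul x (mul y z) = mul y (mul x z))
    (hR : ∀ x y z : g, mul (mul x y) z = mul (mul x z) y)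
    (hcompat : ∀ x y : g, mul x y - mul y x = ⁅x, y⁆) :
    ∃ mul' : g →ₗ[k] g →ₗ[k] g,
      (∀ x y z : g, mul' x (mul' y z) = mul' y (mul' x z)) ∧
      (∀ x y z : g, mul' (mul' x y) z = mul' (mul' x z) y) ∧
      (∀ x y : g, mul' x y - mul' y x = ⁅x, y⁆) ∧
      (∀ x : g, IsNilpotent (mul'.flip x : Module.End k g)) ∧
      (∀ x y : g, mul' x y ∈
        Submodule.span k {z : g | ∃ a b : g, z = mul a b}) :=
  lr_nilpotent_complete_general mul hL hR hcompat
end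

section
/- Let g be a finite-dimensional two-step solvable Lie algebra over a field of characteristic zero, and let g^∞ = ⋂_{i≥1} g^i be the intersection of the terms of the lower central series. Then g^∞ is an abelian ideal and the extension 0 → g^∞ → g → g/g^∞ → 0 splits, so g ≅ g^∞ ⋊ (g/g^∞) with g/g^∞ nilpotent. -/
/-!
Take a Cartan subalgebra `H` of `g`, which exists because `k` is infinite. The Fitting
decomposition of `g` as an `H`-module is `g = H ⊕ P`, where `P` lies in every term of the lower
central series of the `H`-module `g`, hence in `g^∞`. Two-step solvability makes `g^∞ ⊆ [g, g]`
abelian, so `g^∞ = [g, g^∞] = [H + g^∞, g^∞] = [H, g^∞]`; iterating, `g^∞` lies in every term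
of the lower central series of the `H`-module `g`, whose intersection is `P`. Thus `g^∞ = P` is
complementary to the subalgebra `H`, which is therefore the image of a Lie section of
`g → g/g^∞`. The quotient is nilpotent because the lower central series stabilises at `g^∞`.
-/

open LieModule LieAlgebra

section

variable {R L M : Type*} [CommRing R] [LieRing L] [LieAlgebra R L]
  [AddCommGroup M] [Module R M] [LieRingModule L M]

lemma LieModule.lowerCentralSeries_subalgebra_le [LieModule R L M] (H : LieSubalgebra R L)
    (k : ℕ) :
    (lowerCentralSeries R H M k).toSubmodule ≤ (lowerCentralSeries R L M k).toSubmodule := by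
  induction k with
  | zero => simp
  | succ k ih =>
    simp only [lowerCentralSeries_succ, LieSubmodule.lieIdeal_oper_eq_linear_span']
    refine Submodule.span_mono ?_
    rintro _ ⟨x, -, m, hm, rfl⟩
    exact ⟨x, LieSubmodule.mem_top _, m, ih hm, rfl⟩

lemma LieModule.lie_top_iInf_lowerCentralSeries [IsArtinian R M] :
    ⁅(⊤ : LieIdeal R L), ⨅ k, lowerCentralSeries R L M k⁆ = ⨅ k, lowerCentralSeries R L M k := by
  obtain ⟨n, hn⟩ := (eventually_iInf_lowerCentralSeries_eq R L M).exists_forall_of_atTop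
  rw [hn n le_rfl, ← lowerCentralSeries_succ, ← hn n le_rfl, ← hn (n + 1) n.le_succ]

end

section

variable {R L : Type*} [CommRing R] [LieRing L] [LieAlgebra R L]

lemma LieAlgebra.lie_eq_zero_of_mem_lowerCentralSeries_one
    (h : ∀ a b c d : L, ⁅⁅a, b⁆, ⁅c, d⁆⁆ = 0) {x y : L}
    (hx : x ∈ lowerCentralSeries R L L 1) (hy : y ∈ lowerCentralSeries R L L 1) :
    ⁅x, y⁆ = 0 := by
  let S : Set L := {z | ∃ a ∈ (⊤ : LieIdeal R L), ∃ b ∈ (⊤ : LieIdeal R L), ⁅a, b⁆ = z}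
  have hspan : (lowerCentralSeries R L L 1).toSubmodule = Submodule.span R S := by
    rw [lowerCentralSeries_succ, lowerCentralSeries_zero,
      LieSubmodule.lieIdeal_oper_eq_linear_span']
  have hmap : Submodule.map₂ (toEnd R L L : L →ₗ[R] Module.End R L)
      (Submodule.span R S) (Submodule.span R S) = ⊥ := by
    rw [Submodule.map₂_span_span, Submodule.span_eq_bot]
    rintro _ ⟨_, ⟨a, -, b, -, rfl⟩, _, ⟨c, -, d, -, rfl⟩, rfl⟩
    exact h a b c d
  rw [← LieSubmodule.mem_toSubmodule, hspan] at hx hy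
  simpa [hmap] using Submodule.apply_mem_map₂ (toEnd R L L : L →ₗ[R] Module.End R L) hx hy

lemma LieIdeal.toSubmodule_le_lowerCentralSeries_of_sup_eq_top
    {H : LieSubalgebra R L} {I : LieIdeal R L} (hperf : ⁅(⊤ : LieIdeal R L), I⁆ = I)
    (hab : ∀ x ∈ I, ∀ y ∈ I, ⁅x, y⁆ = 0) (hsup : H.toSubmodule ⊔ I.toSubmodule = ⊤) (n : ℕ) :
    I.toSubmodule ≤ (lowerCentralSeries R H L n).toSubmodule := by
  induction n with
  | zero => simp
  | succ n ih =>
    rw [← hperf, LieSubmodule.lieIdeal_oper_eq_linear_span', Submodule.span_le]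
    rintro _ ⟨y, -, i, hi, rfl⟩
    obtain ⟨h, hh, p, hp, rfl⟩ := Submodule.mem_sup.mp (hsup ▸ Submodule.mem_top : y ∈ _)
    rw [add_lie, hab p hp i hi, add_zero, lowerCentralSeries_succ]
    exact LieSubmodule.lie_mem_lie (x := (⟨h, hh⟩ : H)) (LieSubmodule.mem_top _) (ih hi)

lemma LieIdeal.exists_section_of_isCompl {I : LieIdeal R L} {H : LieSubalgebra R L}
    (h : IsCompl I.toSubmodule H.toSubmodule) :
    ∃ s : (L ⧸ I) →ₗ⁅R⁆ L, ∀ z, LieSubmodule.Quotient.mk' I (s z) = z := by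
  let e := Submodule.quotientEquivOfIsCompl _ _ h
  refine ⟨{ H.toSubmodule.subtype ∘ₗ e.toLinearMap with map_lie' := ?_ },
    Submodule.mk_quotientEquivOfIsCompl_apply h⟩
  intro z w
  have hzw : e.symm ⟨⁅(e z : L), e w⁆, H.lie_mem (e z).2 (e w).2⟩ = ⁅z, w⁆ := by
    rw [Submodule.quotientEquivOfIsCompl_symm_apply]
    conv_rhs => rw [← Submodule.mk_quotientEquivOfIsCompl_apply h z,
      ← Submodule.mk_quotientEquivOfIsCompl_apply h w]
    exact LieSubmodule.Quotient.mk_bracket I _ _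
  change (e ⁅z, w⁆ : L) = ⁅(e z : L), (e w : L)⁆
  rw [← hzw, e.apply_symm_apply]

lemma LieAlgebra.isNilpotent_quotient_iInf_lowerCentralSeries [IsArtinian R L] :
    LieRing.IsNilpotent (L ⧸ ⨅ k, lowerCentralSeries R L L k) := by
  obtain ⟨n, hn⟩ := (eventually_iInf_lowerCentralSeries_eq R L L).exists_forall_of_atTop
  have : LieModule.IsNilpotent L (L ⧸ ⨅ k, lowerCentralSeries R L L k) :=
    (isNilpotent_quotient_iff R L L _).mpr ⟨n, (hn n le_rfl).ge⟩
  obtain ⟨m, hm⟩ := (isNilpotent_iff R L _).mp this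
  refine (isNilpotent_iff R _ _).mpr ⟨m, ?_⟩
  rw [← LieSubmodule.toSubmodule_inj, ← coe_lowerCentralSeries_ideal_quot_eq, hm]
  rfl

theorem LieSubalgebra.isCompl_iInf_lowerCentralSeries [IsNoetherian R L] [IsArtinian R L]
    (H : LieSubalgebra R L) [H.IsCartanSubalgebra]
    (hab : ∀ x ∈ ⨅ k, lowerCentralSeries R L L k, ∀ y ∈ ⨅ k, lowerCentralSeries R L L k,
      ⁅x, y⁆ = 0) :
    IsCompl H.toSubmodule (⨅ k, lowerCentralSeries R L L k).toSubmodule := by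
  set I := ⨅ k, lowerCentralSeries R L L k
  have hfit : IsCompl H.toSubmodule (posFittingComp R H L).toSubmodule := by
    have := isCompl_genWeightSpace_zero_posFittingComp R H L
    rwa [← LieSubmodule.isCompl_toSubmodule, ← rootSpace, rootSpace_zero_eq] at this
  have hPI : (posFittingComp R H L).toSubmodule ≤ I.toSubmodule := fun x hx ↦ by
    rw [LieSubmodule.mem_toSubmodule] at hx
    rw [LieSubmodule.mem_toSubmodule, LieSubmodule.mem_iInf]
    exact fun k ↦ lowerCentralSeries_subalgebra_le H k
      ((LieSubmodule.mem_iInf _).mp (posFittingComp_le_iInf_lowerCentralSeries R H L hx) k)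
  have hsup : H.toSubmodule ⊔ I.toSubmodule = ⊤ :=
    top_le_iff.mp (hfit.sup_eq_top ▸ sup_le_sup_left hPI _)
  have hIP : I.toSubmodule ≤ (posFittingComp R H L).toSubmodule := fun x hx ↦ by
    rw [← iInf_lowerCentralSeries_eq_posFittingComp, LieSubmodule.mem_toSubmodule,
      LieSubmodule.mem_iInf]
    exact fun n ↦ LieIdeal.toSubmodule_le_lowerCentralSeries_of_sup_eq_top
      lie_top_iInf_lowerCentralSeries hab hsup n hx
  rwa [← hPI.antisymm hIP]

end

/-- For a finite-dimensional two-step solvable Lie algebra `g`, the ideal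
`g^∞ = ⋂ i, g^i` is abelian, the quotient `g/g^∞` is nilpotent, and the
extension `0 → g^∞ → g → g/g^∞ → 0` splits. -/
theorem lr_splitting {k g : Type*} [Field k] [CharZero k]
    [LieRing g] [LieAlgebra k g] [FiniteDimensional k g]
    (h2 : ∀ a b c d : g, ⁅⁅a, b⁆, ⁅c, d⁆⁆ = 0) :
    ∀ I : LieIdeal k g, I = ⨅ i : ℕ, LieModule.lowerCentralSeries k g g i →
      (∀ x ∈ I, ∀ y ∈ I, ⁅x, y⁆ = (0 : g)) ∧
      LieRing.IsNilpotent (g ⧸ I) ∧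
      ∃ s : (g ⧸ I) →ₗ⁅k⁆ g, ∀ z : g ⧸ I, LieSubmodule.Quotient.mk' I (s z) = z := by
  rintro _ rfl
  have hab : ∀ x ∈ ⨅ i, lowerCentralSeries k g g i, ∀ y ∈ ⨅ i, lowerCentralSeries k g g i,
      ⁅x, y⁆ = 0 := fun x hx y hy ↦
    lie_eq_zero_of_mem_lowerCentralSeries_one h2 (iInf_le (lowerCentralSeries k g g) 1 hx)
      (iInf_le (lowerCentralSeries k g g) 1 hy)
  obtain ⟨x, hcartan⟩ := exists_isCartanSubalgebra_engel k g
  exact ⟨hab, isNilpotent_quotient_iInf_lowerCentralSeries, LieIdeal.exists_section_of_isCompl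
    (LieSubalgebra.isCompl_iInf_lowerCentralSeries (LieSubalgebra.engel k x) hab).symm⟩
end

section
/- Let g be a finite-dimensional Lie algebra over a field of characteristic zero. If g admits an LR-structure, then g admits a complete LR-structure. -/
/-!
The right multiplications `R(y) : x ↦ x·y` of an LR-structure commute, so `g` has a joint Fitting
decomposition `g = g₀ ⊕ g₁`: every `R(y)` is nilpotent on `g₀`, and `g₁` lies in `g·g`. Since
`(ab)(cd) = (cd)(ab)`, the product is commutative on `g₁`. Writing `x = x₀ + x₁`, the product
`x ∘ y = x₀·y − y₁·x₀` is again an LR-structure with the same commutator, and its right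
multiplication by `x` is `(R(x) − L(x₁)) P` for the projection `P` onto `g₀`; it is nilpotent
because `P (R(x) − L(x₁)) = R(x) P` is.
-/

namespace Module.End

open LinearMap (ker range)

variable {R M : Type*} [Ring R] [AddCommGroup M] [Module R M]

lemma ker_mem_invtSubmodule_of_commute {f T : Module.End R M} (h : Commute f T) :
    ker f ∈ T.invtSubmodule :=
  (mem_invtSubmodule_iff_forall_mem_of_mem T).2 fun x hx => by
    rw [LinearMap.mem_ker] at hx ⊢
    rw [← Module.End.mul_apply, h.eq, Module.End.mul_apply, hx, map_zero]

lemma range_mem_invtSubmodule_of_commute {f T : Module.End R M} (h : Commute f T) :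
    range f ∈ T.invtSubmodule :=
  (mem_invtSubmodule_iff_forall_mem_of_mem T).2 fun _ ⟨y, hy⟩ =>
    ⟨T y, by rw [← hy, ← Module.End.mul_apply, h.eq, Module.End.mul_apply]⟩

/-- `e` projects onto a joint Fitting-zero component of the family `s`, along a complement
contained in the images of the members of `s`. -/
structure IsFittingProjection (s : Set (Module.End R M)) (e : Module.End R M) : Prop where
  isIdempotentElem : IsIdempotentElem e
  commute : ∀ T, (∀ f ∈ s, Commute f T) → Commute e T
  isNilpotent_mul : ∀ f ∈ s, IsNilpotent (f * e)
  range_one_sub_le : range (1 - e) ≤ ⨆ f ∈ s, range f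

lemma exists_isFittingProjection_singleton [IsNoetherian R M] [IsArtinian R M]
    (f : Module.End R M) : ∃ e, IsFittingProjection {f} e := by
  obtain ⟨n, hn, hcompl⟩ := ((Filter.eventually_ge_atTop 1).and
    f.eventually_isCompl_ker_pow_range_pow).exists
  set e := (ker (f ^ n)).projection (range (f ^ n)) hcompl
  have he : IsIdempotentElem e := Submodule.isIdempotentElem_projection hcompl
  have hcomm : ∀ T, Commute f T → Commute e T := fun T hT => by
    rw [LinearMap.IsIdempotentElem.commute_iff he, Submodule.range_projection,
      Submodule.ker_projection]
    exact ⟨ker_mem_invtSubmodule_of_commute (hT.pow_left n),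
      range_mem_invtSubmodule_of_commute (hT.pow_left n)⟩
  refine ⟨e, he, fun T hT => hcomm T (hT f rfl), ?_, ?_⟩
  · simp only [Set.mem_singleton_iff, forall_eq]
    refine ⟨n, LinearMap.ext fun x => ?_⟩
    rw [(hcomm f (Commute.refl f)).symm.mul_pow, he.pow_eq (by omega), Module.End.mul_apply]
    exact Submodule.projection_apply_mem hcompl x
  · have h1e : 1 - e = (range (f ^ n)).projection (ker (f ^ n)) hcompl.symm :=
      (Submodule.projection_eq_id_sub_projection hcompl).symm
    obtain ⟨m, rfl⟩ := Nat.exists_eq_add_of_le' hn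
    rw [iSup_singleton, h1e, Submodule.range_projection, pow_succ']
    exact LinearMap.range_comp_le_range _ _

namespace IsFittingProjection

variable {s t : Set (Module.End R M)} {e e' : Module.End R M}

lemma mul (he : IsFittingProjection s e) (he' : IsFittingProjection t e')
    (hst : ∀ f ∈ s, ∀ f' ∈ t, Commute f f') : IsFittingProjection (s ∪ t) (e * e') := by
  have hse' : ∀ f ∈ s, Commute f e' := fun f hf =>
    (he'.commute f fun f' hf' => (hst f hf f' hf').symm).symm
  have hte : ∀ f' ∈ t, Commute f' e := fun f' hf' =>
    (he.commute f' fun f hf => hst f hf f' hf').symm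
  have hee' : Commute e e' := he.commute e' hse'
  refine ⟨he.isIdempotentElem.mul_of_commute hee' he'.isIdempotentElem, ?_, ?_, ?_⟩
  · intro T hT
    exact (he.commute T fun f hf => hT f (.inl hf)).mul_left
      (he'.commute T fun f hf => hT f (.inr hf))
  · rintro f (hf | hf)
    · rw [← mul_assoc]
      exact ((hse' f hf).mul_left hee').isNilpotent_mul_right (he.isNilpotent_mul f hf)
    · rw [hee'.eq, ← mul_assoc]
      exact ((hte f hf).mul_left hee'.symm).isNilpotent_mul_right (he'.isNilpotent_mul f hf)
  · have h1 : 1 - e * e' = (1 - e) + (1 - e') * e := by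
      rw [sub_mul, one_mul, ← hee'.eq]; abel
    rw [h1, iSup_union]
    refine (LinearMap.range_add_le _ _).trans (sup_le_sup he.range_one_sub_le ?_)
    exact (LinearMap.range_comp_le_range _ _).trans he'.range_one_sub_le

end IsFittingProjection

lemma exists_isFittingProjection_of_finite [IsNoetherian R M] [IsArtinian R M]
    {s : Set (Module.End R M)} (hs : s.Finite) (hcomm : ∀ f ∈ s, ∀ g ∈ s, Commute f g) :
    ∃ e, IsFittingProjection s e := by
  refine Set.Finite.induction_on_subset s hs ⟨1, ?_⟩ fun {a t} ha hts _ ⟨e, he⟩ => ?_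
  · refine ⟨.one, fun T _ => Commute.one_left T, by simp, by simp⟩
  · obtain ⟨ea, hea⟩ := exists_isFittingProjection_singleton a
    rw [Set.insert_eq]
    refine ⟨ea * e, hea.mul he ?_⟩
    rintro f rfl f' hf'
    exact hcomm f ha f' (hts hf')

section CommRing

variable {R M : Type*} [CommRing R] [AddCommGroup M] [Module R M] {s : Set (Module.End R M)}

lemma commute_of_mem_span {T f : Module.End R M} (hT : ∀ g ∈ s, Commute g T)
    (hf : f ∈ Submodule.span R s) : Commute f T := by
  induction hf using Submodule.span_induction with
  | mem g hg => exact hT g hg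
  | zero => exact Commute.zero_left T
  | add g g' _ _ hg hg' => exact hg.add_left hg'
  | smul c g _ hg => exact hg.smul_left c

lemma IsFittingProjection.span {e : Module.End R M} (he : IsFittingProjection s e)
    (hcomm : ∀ f ∈ s, ∀ g ∈ s, Commute f g) :
    IsFittingProjection (Submodule.span R s) e := by
  have hcent : ∀ g ∈ Submodule.span R s, ∀ f ∈ s, Commute f g := fun g hg f hf =>
    (commute_of_mem_span (fun f' hf' => hcomm f' hf' f hf) hg).symm
  have hspan : ∀ f ∈ Submodule.span R s, ∀ g ∈ Submodule.span R s, Commute f g :=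
    fun f hf g hg => commute_of_mem_span (hcent g hg) hf
  have he_comm : ∀ f ∈ Submodule.span R s, Commute e f := fun f hf => he.commute f (hcent f hf)
  refine ⟨he.isIdempotentElem,
    fun T hT => he.commute T fun f hf => hT f (Submodule.subset_span hf), fun f hf => ?_,
    he.range_one_sub_le.trans (biSup_mono fun f hf => Submodule.subset_span hf)⟩
  induction hf using Submodule.span_induction with
  | mem g hg => exact he.isNilpotent_mul g hg
  | zero => simp
  | add g g' hg hg' ihg ihg' =>
    rw [add_mul]
    refine Commute.isNilpotent_add ?_ ihg ihg'
    exact ((hspan g hg g' hg').mul_right (he_comm g hg).symm).mul_left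
      ((he_comm g' hg').mul_right (Commute.refl e))
  | smul c g _ ihg => exact smul_mul_assoc c g e ▸ ihg.smul c

lemma exists_isFittingProjection [IsNoetherian R M] [IsArtinian R M]
    (S : Submodule R (Module.End R M)) (hS : S.FG) (hcomm : ∀ f ∈ S, ∀ g ∈ S, Commute f g) :
    ∃ e, IsFittingProjection (S : Set (Module.End R M)) e := by
  obtain ⟨t, rfl⟩ := hS
  have ht : ∀ f ∈ (t : Set (Module.End R M)), ∀ g ∈ (t : Set (Module.End R M)), Commute f g :=
    fun f hf g hg => hcomm f (Submodule.subset_span hf) g (Submodule.subset_span hg)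
  obtain ⟨e, he⟩ := exists_isFittingProjection_of_finite t.finite_toSet ht
  exact ⟨e, he.span ht⟩

end CommRing

end Module.End

lemma isNilpotent_mul_comm {M₀ : Type*} [MonoidWithZero M₀] {a b : M₀} :
    IsNilpotent (a * b) ↔ IsNilpotent (b * a) :=
  have swap {a b : M₀} : IsNilpotent (a * b) → IsNilpotent (b * a) := fun ⟨n, hn⟩ =>
    ⟨n + 1, by rw [pow_succ, ← mul_assoc, mul_pow_mul, hn, mul_zero, zero_mul]⟩
  ⟨swap, swap⟩

section LRProduct

variable {R V : Type*} [CommRing R] [AddCommGroup V] [Module R V]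

structure IsLRProduct_s16 (mul : V →ₗ[R] V →ₗ[R] V) : Prop where
  left_comm : ∀ x y z, mul x (mul y z) = mul y (mul x z)
  right_comm : ∀ x y z, mul (mul x y) z = mul (mul x z) y

def deformedProduct (mul : V →ₗ[R] V →ₗ[R] V) (P : Module.End R V) : V →ₗ[R] V →ₗ[R] V :=
  (mul - (mul ∘ₗ (1 - P)).flip) ∘ₗ P

@[simp]
lemma deformedProduct_apply (mul : V →ₗ[R] V →ₗ[R] V) (P : Module.End R V) (x y : V) :
    deformedProduct mul P x y = mul (P x) y - mul ((1 - P) y) (P x) :=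
  rfl

lemma apply_mul_of_commute_flip {mul : V →ₗ[R] V →ₗ[R] V} {Q : Module.End R V} {b : V}
    (hQ : Commute Q (mul.flip b)) (a : V) : Q (mul a b) = mul (Q a) b :=
  LinearMap.congr_fun hQ.eq a

namespace IsLRProduct_s16

variable {mul : V →ₗ[R] V →ₗ[R] V} (h : IsLRProduct_s16 mul)
include h

lemma commute_flip_s16 (x y : V) : Commute (mul.flip x) (mul.flip y) :=
  LinearMap.ext fun z => h.right_comm z y x

lemma mul_mul_comm_mul_mul (a b c d : V) :
    mul (mul a b) (mul c d) = mul (mul c d) (mul a b) :=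
  calc mul (mul a b) (mul c d) = mul (mul c (mul a d)) b := by
        rw [h.right_comm a b, h.left_comm a c d]
    _ = mul (mul c b) (mul a d) := h.right_comm c _ b
    _ = mul a (mul (mul c d) b) := by rw [h.right_comm c d b, h.left_comm a]
    _ = mul (mul c d) (mul a b) := h.left_comm a _ b

lemma mul_comm_of_mem_map₂ {u v : V} (hu : u ∈ Submodule.map₂ mul ⊤ ⊤)
    (hv : v ∈ Submodule.map₂ mul ⊤ ⊤) : mul u v = mul v u := by
  have h₁ (a b : V) :
      Submodule.map₂ mul ⊤ ⊤ ≤ LinearMap.eqLocus (mul (mul a b)) (mul.flip (mul a b)) :=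
    Submodule.map₂_le.2 fun c _ d _ => h.mul_mul_comm_mul_mul a b c d
  have h₂ : Submodule.map₂ mul ⊤ ⊤ ≤ LinearMap.eqLocus (mul.flip v) (mul v) :=
    Submodule.map₂_le.2 fun a _ b _ => h₁ a b hv
  exact h₂ hu

lemma mul_apply_mul_of_commute {Q : Module.End R V} (hQ : ∀ y, Commute Q (mul.flip y))
    (x y z : V) : mul x (mul (Q y) z) = mul (Q x) (mul y z) := by
  rw [h.left_comm x, ← apply_mul_of_commute_flip (hQ _), h.left_comm y,
    apply_mul_of_commute_flip (hQ _)]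

end IsLRProduct_s16

section Deformation

variable {mul : V →ₗ[R] V →ₗ[R] V} {P : Module.End R V} (hP : IsIdempotentElem P)
  (hPR : ∀ y, Commute P (mul.flip y))
include hP hPR

lemma apply_deformedProduct (x y : V) : P (deformedProduct mul P x y) = mul (P x) y := by
  have hPQ : P ((1 - P) y) = 0 := LinearMap.congr_fun hP.mul_one_sub_self y
  have hPP : P (P x) = P x := LinearMap.congr_fun hP.eq x
  rw [deformedProduct_apply, map_sub, apply_mul_of_commute_flip (hPR _),
    apply_mul_of_commute_flip (hPR _), hPQ, hPP, LinearMap.map_zero₂, sub_zero]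

lemma one_sub_apply_deformedProduct (x y : V) :
    (1 - P) (deformedProduct mul P x y) = -mul ((1 - P) y) (P x) := by
  have hQR (y : V) : Commute (1 - P) (mul.flip y) := (Commute.one_left _).sub_left (hPR y)
  have hQP : (1 - P) (P x) = 0 := LinearMap.congr_fun hP.one_sub_mul_self x
  have hQQ : (1 - P) ((1 - P) y) = (1 - P) y := LinearMap.congr_fun hP.one_sub.eq y
  rw [deformedProduct_apply, map_sub, apply_mul_of_commute_flip (hQR _),
    apply_mul_of_commute_flip (hQR _), hQP, hQQ, LinearMap.map_zero₂, zero_sub]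

lemma IsLRProduct_s16.deformed (h : IsLRProduct_s16 mul) : IsLRProduct_s16 (deformedProduct mul P) := by
  have hQR (y : V) : Commute (1 - P) (mul.flip y) := (Commute.one_left _).sub_left (hPR y)
  have hkill (x y z : V) : mul (P x) (mul ((1 - P) y) z) = 0 := by
    have hQP : (1 - P) (P x) = 0 := LinearMap.congr_fun hP.one_sub_mul_self x
    rw [h.mul_apply_mul_of_commute hQR, hQP, LinearMap.map_zero₂]
  constructor
  · intro x y z
    have key (x y : V) : deformedProduct mul P x (deformedProduct mul P y z) =
        mul (P x) (mul (P y) z) + mul (mul ((1 - P) z) (P y)) (P x) := by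
      rw [deformedProduct_apply, one_sub_apply_deformedProduct hP hPR, deformedProduct_apply,
        map_sub, hkill, LinearMap.map_neg₂]
      abel
    rw [key, key, h.left_comm (P x), h.right_comm ((1 - P) z)]
  · intro x y z
    have key (y z : V) : deformedProduct mul P (deformedProduct mul P x y) z =
        mul (mul (P x) y) z := by
      rw [deformedProduct_apply, apply_deformedProduct hP hPR, h.left_comm _ (P x), hkill,
        sub_zero]
    rw [key, key, h.right_comm]

lemma isNilpotent_flip_deformedProduct {x : V} (hx : IsNilpotent (mul.flip x * P)) :
    IsNilpotent ((deformedProduct mul P).flip x) := by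
  set B := mul.flip x - mul ((1 - P) x)
  have hflip : (deformedProduct mul P).flip x = B * P := rfl
  have hPQ : P ((1 - P) x) = 0 := LinearMap.congr_fun hP.mul_one_sub_self x
  have hPB : P * B = mul.flip x * P := by
    ext v
    change P (mul v x - mul ((1 - P) x) v) = mul (P v) x
    rw [map_sub, apply_mul_of_commute_flip (hPR x), apply_mul_of_commute_flip (hPR v), hPQ,
      LinearMap.map_zero₂, sub_zero]
  rw [hflip, ← isNilpotent_mul_comm, hPB]
  exact hx

end Deformation

lemma deformedProduct_sub_swap {mul : V →ₗ[R] V →ₗ[R] V} {P : Module.End R V}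
    (hQ : ∀ x y, mul ((1 - P) x) ((1 - P) y) = mul ((1 - P) y) ((1 - P) x)) (x y : V) :
    deformedProduct mul P x y - deformedProduct mul P y x = mul x y - mul y x := by
  have split (v : V) : P v + (1 - P) v = v := by simp
  have h₁ (a b : V) : mul a b = mul (P a) b + mul ((1 - P) a) b := by
    rw [← LinearMap.add_apply, ← map_add, split]
  have h₂ (a b : V) : mul a b = mul a (P b) + mul a ((1 - P) b) := by rw [← map_add, split]
  rw [deformedProduct_apply, deformedProduct_apply, h₁ x y, h₁ y x, h₂ (P x) y, h₂ (P y) x,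
    h₂ ((1 - P) x) y, h₂ ((1 - P) y) x, hQ x y]
  abel

end LRProduct

theorem lr_complete_of_lr_general {k g : Type*} [Field k]
    [LieRing g] [LieAlgebra k g] [FiniteDimensional k g]
    (mul : g →ₗ[k] g →ₗ[k] g)
    (hL : ∀ x y z : g, mul x (mul y z) = mul y (mul x z))
    (hR : ∀ x y z : g, mul (mul x y) z = mul (mul x z) y)
    (hcompat : ∀ x y : g, mul x y - mul y x = ⁅x, y⁆) :
    ∃ mul' : g →ₗ[k] g →ₗ[k] g,
      (∀ x y z : g, mul' x (mul' y z) = mul' y (mul' x z)) ∧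
      (∀ x y z : g, mul' (mul' x y) z = mul' (mul' x z) y) ∧
      (∀ x y : g, mul' x y - mul' y x = ⁅x, y⁆) ∧
      (∀ x : g, IsNilpotent (mul'.flip x : Module.End k g)) := by
  have h : IsLRProduct_s16 mul := ⟨hL, hR⟩
  obtain ⟨P, hP⟩ := Module.End.exists_isFittingProjection (LinearMap.range mul.flip)
    (IsNoetherian.noetherian _) (by rintro _ ⟨x, rfl⟩ _ ⟨y, rfl⟩; exact h.commute_flip_s16 x y)
  have hPR (y : g) : Commute P (mul.flip y) :=
    hP.commute _ fun _ ⟨x, hx⟩ => hx ▸ h.commute_flip_s16 x y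
  have hQ (v : g) : (1 - P) v ∈ Submodule.map₂ mul ⊤ ⊤ := by
    refine (hP.range_one_sub_le.trans (iSup₂_le ?_)) ⟨v, rfl⟩
    rintro _ ⟨y, rfl⟩ _ ⟨x, rfl⟩
    exact Submodule.apply_mem_map₂ mul Submodule.mem_top Submodule.mem_top
  have hdef := h.deformed hP.isIdempotentElem hPR
  refine ⟨deformedProduct mul P, hdef.left_comm, hdef.right_comm, fun x y => ?_, fun x => ?_⟩
  · rw [deformedProduct_sub_swap (fun x y => h.mul_comm_of_mem_map₂ (hQ x) (hQ y)), hcompat]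
  · exact isNilpotent_flip_deformedProduct hP.isIdempotentElem hPR
      (hP.isNilpotent_mul _ ⟨x, rfl⟩)

/-- A finite-dimensional Lie algebra admitting an LR-structure admits a
complete LR-structure. -/
theorem lr_complete_of_lr {k g : Type*} [Field k] [CharZero k]
    [LieRing g] [LieAlgebra k g] [FiniteDimensional k g]
    (mul : g →ₗ[k] g →ₗ[k] g)
    (hL : ∀ x y z : g, mul x (mul y z) = mul y (mul x z))
    (hR : ∀ x y z : g, mul (mul x y) z = mul (mul x z) y)
    (hcompat : ∀ x y : g, mul x y - mul y x = ⁅x, y⁆) :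
    ∃ mul' : g →ₗ[k] g →ₗ[k] g,
      (∀ x y z : g, mul' x (mul' y z) = mul' y (mul' x z)) ∧
      (∀ x y z : g, mul' (mul' x y) z = mul' (mul' x z) y) ∧
      (∀ x y : g, mul' x y - mul' y x = ⁅x, y⁆) ∧
      (∀ x : g, IsNilpotent (mul'.flip x : Module.End k g)) :=
  lr_complete_of_lr_general mul hL hR hcompat
end
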